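/- arXiv:1001.1948 — 2 statements merged into one kernel-verified Lean document; each statement's English description precedes it below -/
import Mathlib

section
/- (Theorem 3) For ZigZag decoding with n senders and erasure probability p ∈ (0,1), the delivery time T_D(n) = T_n is almost surely finite and its expectation equals E[T_D(n)] = Σ_{k=1}^{n} 1/(1 − p^k). -/
/-
Let `G_k = T_{k+1} - T_k`. On the event `{T_k = t, U_k = U}` (which is decided by the erasures in
slots `1, …, t`), `G_k > s` exactly when all `n - k` senders of `U` are erased in slots
`t + 1, …, t + s`. By independence this has conditional probability `p ^ ((n - k) s)`, so `G_k` is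
a.s. finite and `E[G_k] = ∑ₛ p ^ ((n - k) s) = 1 / (1 - p ^ (n - k))`; summing over `k < n` gives
`E[T_n]`.
-/

open MeasureTheory ProbabilityTheory

/-- The ZigZag acknowledgment process. `zigzagStep n e ω k = (T_k, U_k)` where `T_0 = 0`,
`U_0 = {1,…,n}` (all senders unacknowledged), and for `k ≥ 0`:
`T_{k+1} = inf { t > T_k : ∃ i ∈ U_k, e i t ω = 0 }` (the next slot in which some
unacknowledged sender's link is not erased), and `U_{k+1}` is `U_k` minus the
smallest-index sender `i ∈ U_k` with `e i T_{k+1} ω = 0` (that sender is acknowledged and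
never transmits again). -/
noncomputable def zigzagStep {Ω : Type*} (n : ℕ) (e : Fin n → ℕ → Ω → Bool) (ω : Ω) :
    ℕ → ℕ × Finset (Fin n)
  | 0 => (0, Finset.univ)
  | k + 1 =>
    let prev := zigzagStep n e ω k
    let t := sInf {t : ℕ | prev.1 < t ∧
      (prev.2.filter (fun i => e i t ω = false)).Nonempty}
    (t, prev.2 \ prev.2.filter (fun i =>
      e i t ω = false ∧ ∀ j ∈ prev.2, e j t ω = false → i ≤ j))

open MeasureTheory ProbabilityTheory Finset Function
open scoped ENNReal

namespace Finset

theorem sum_range_tsub_eq_sum_Icc {M : Type*} [AddCommMonoid M] (f : ℕ → M) (n : ℕ) :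
    ∑ k ∈ range n, f (n - k) = ∑ k ∈ Icc 1 n, f k := by
  refine sum_nbij' (n - ·) (n - ·) ?_ ?_ ?_ ?_ fun _ _ => rfl <;> intro k hk <;>
    simp at hk ⊢ <;> omega

theorem card_filter_isLeast {α : Type*} [LinearOrder α] (U : Finset α) (P : α → Prop)
    [DecidablePred P] [DecidablePred fun i => P i ∧ ∀ j ∈ U, P j → i ≤ j]
    (h : (U.filter P).Nonempty) :
    #(U.filter fun i => P i ∧ ∀ j ∈ U, P j → i ≤ j) = 1 := by
  refine card_eq_one.2 ⟨(U.filter P).min' h, ?_⟩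
  ext i
  simp only [mem_filter, mem_singleton]
  constructor
  · rintro ⟨hiU, hi, hmin⟩
    exact le_antisymm (hmin _ (mem_filter.1 ((U.filter P).min'_mem h)).1
      (mem_filter.1 ((U.filter P).min'_mem h)).2)
      ((U.filter P).min'_le i (mem_filter.2 ⟨hiU, hi⟩))
  · rintro rfl
    obtain ⟨hU, hP⟩ := mem_filter.1 ((U.filter P).min'_mem h)
    exact ⟨hU, hP, fun j hj hPj => (U.filter P).min'_le j (mem_filter.2 ⟨hj, hPj⟩)⟩

end Finset

section NatValued

variable {Ω : Type*} [MeasurableSpace Ω] {μ : Measure Ω} {g : Ω → ℕ}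

theorem aemeasurable_of_nullMeasurableSet_lt (hg : ∀ s : ℕ, NullMeasurableSet {ω | s < g ω} μ) :
    AEMeasurable g μ :=
  NullMeasurable.aemeasurable (measurable_of_Ioi (δ := NullMeasurableSpace Ω μ) hg)

theorem lintegral_natCast_eq_tsum_measure_lt
    (hg : ∀ s : ℕ, NullMeasurableSet {ω | s < g ω} μ) :
    ∫⁻ ω, (g ω : ℝ≥0∞) ∂μ = ∑' s : ℕ, μ {ω | s < g ω} := by
  have hsum : ∀ ω, (g ω : ℝ≥0∞) = ∑' s : ℕ, {ω | s < g ω}.indicator 1 ω := fun ω => by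
    rw [tsum_eq_sum (s := range (g ω)) fun s hs => by simp_all]
    simp [Set.indicator_apply, filter_true_of_mem]
  simp_rw [hsum]
  rw [lintegral_tsum fun s => measurable_one.aemeasurable.indicator₀ (hg s)]
  exact tsum_congr fun s => lintegral_indicator_one₀ (hg s)

end NatValued

namespace ZigZag

variable {Ω : Type*} {n : ℕ} (e : Fin n → ℕ → Ω → Bool)

def nextSlots (ω : Ω) (k : ℕ) : Set ℕ :=
  {t | (zigzagStep n e ω k).1 < t ∧
    ((zigzagStep n e ω k).2.filter (fun i => e i t ω = false)).Nonempty}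

/-- `T_1, …, T_k` are genuine infima, not the junk value `sInf ∅ = 0`. -/
def Reaches (ω : Ω) (k : ℕ) : Prop := ∀ j < k, (nextSlots e ω j).Nonempty

variable {e} {ω : Ω} {k : ℕ}

theorem zigzagStep_succ : zigzagStep n e ω (k + 1) =
    (sInf (nextSlots e ω k), (zigzagStep n e ω k).2 \ (zigzagStep n e ω k).2.filter fun i =>
      e i (sInf (nextSlots e ω k)) ω = false ∧
        ∀ j ∈ (zigzagStep n e ω k).2, e j (sInf (nextSlots e ω k)) ω = false → i ≤ j) :=
  rfl

theorem Reaches.mono {l : ℕ} (h : Reaches e ω k) (hl : l ≤ k) : Reaches e ω l :=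
  fun j hj => h j (hj.trans_le hl)

theorem Reaches.succ_iff : Reaches e ω (k + 1) ↔ Reaches e ω k ∧ (nextSlots e ω k).Nonempty := by
  simp only [Reaches, Nat.lt_succ_iff_lt_or_eq, or_imp, forall_and, forall_eq]

theorem fst_zigzagStep_succ_mem (h : Reaches e ω (k + 1)) :
    (zigzagStep n e ω (k + 1)).1 ∈ nextSlots e ω k :=
  Nat.sInf_mem (h k k.lt_succ_self)

theorem fst_zigzagStep_lt_succ (h : Reaches e ω (k + 1)) :
    (zigzagStep n e ω k).1 < (zigzagStep n e ω (k + 1)).1 :=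
  (fst_zigzagStep_succ_mem h).1

theorem card_snd_zigzagStep (h : Reaches e ω k) (hk : k ≤ n) :
    #(zigzagStep n e ω k).2 = n - k := by
  induction k with
  | zero => simp [zigzagStep]
  | succ k ih =>
    have hU := ih (h.mono k.le_succ) (by omega)
    rw [zigzagStep_succ, card_sdiff_of_subset (filter_subset _ _),
      card_filter_isLeast _ _ (Nat.sInf_mem (h k k.lt_succ_self)).2, hU]
    omega

variable (e) in
noncomputable def gap (ω : Ω) (k : ℕ) : ℕ :=
  (zigzagStep n e ω (k + 1)).1 - (zigzagStep n e ω k).1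

theorem sum_range_gap (h : Reaches e ω k) :
    ∑ j ∈ range k, gap e ω j = (zigzagStep n e ω k).1 := by
  induction k with
  | zero => simp [zigzagStep]
  | succ k ih =>
    rw [sum_range_succ, ih (h.mono k.le_succ), gap]
    have := fst_zigzagStep_lt_succ h
    omega

variable (e) in
/-- `ω` and `ω'` have the same erasures in the slots `1, …, t`. -/
def EqOnSlots (t : ℕ) (ω ω' : Ω) : Prop := ∀ i, ∀ r < t, e i (r + 1) ω = e i (r + 1) ω'

theorem EqOnSlots.apply {t : ℕ} {ω' : Ω} (h : EqOnSlots e t ω ω') (i : Fin n) {m : ℕ}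
    (hm0 : 0 < m) (hmt : m ≤ t) : e i m ω = e i m ω' := by
  obtain ⟨r, rfl⟩ := Nat.exists_eq_add_one.2 hm0
  exact h i r (by omega)

theorem zigzagStep_eq_of_eqOnSlots {ω' : Ω} (hk : Reaches e ω k)
    (h : EqOnSlots e (zigzagStep n e ω k).1 ω ω') :
    zigzagStep n e ω' k = zigzagStep n e ω k ∧ Reaches e ω' k := by
  induction k with
  | zero => exact ⟨rfl, fun j hj => absurd hj j.not_lt_zero⟩
  | succ k ih =>
    have hlt := fst_zigzagStep_lt_succ hk
    obtain ⟨hZ, hR⟩ := ih (hk.mono k.le_succ) fun i r hr => h i r (hr.trans hlt)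
    set t := (zigzagStep n e ω (k + 1)).1
    have ht_mem : t ∈ nextSlots e ω k := fst_zigzagStep_succ_mem hk
    have hmem : ∀ m ≤ t, m ∈ nextSlots e ω' k ↔ m ∈ nextSlots e ω k := by
      intro m hm
      simp only [nextSlots, hZ, Set.mem_ofPred_eq, and_congr_right_iff]
      intro hm0
      simp only [h.apply _ (by omega) hm]
    have hinf : sInf (nextSlots e ω' k) = t := by
      refine le_antisymm (Nat.sInf_le ((hmem t le_rfl).2 ht_mem)) (le_of_not_gt fun hgt => ?_)
      have hS := Nat.sInf_mem ⟨t, (hmem t le_rfl).2 ht_mem⟩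
      exact (Nat.sInf_le ((hmem _ hgt.le).1 hS)).not_gt hgt
    refine ⟨?_, Reaches.succ_iff.2 ⟨hR, t, (hmem t le_rfl).2 ht_mem⟩⟩
    have he : ∀ i, e i t ω' = e i t ω := fun i => (h.apply i (by omega) le_rfl).symm
    rw [zigzagStep_succ (ω := ω'), hinf, hZ]
    simp only [he]
    rfl

variable (e) in
def erasedAfter (t s : ℕ) (U : Finset (Fin n)) : Set Ω :=
  {ω | ∀ i ∈ U, ∀ r < s, e i (t + r + 1) ω = true}

theorem mem_erasedAfter_iff {s : ℕ} :
    ω ∈ erasedAfter e (zigzagStep n e ω k).1 s (zigzagStep n e ω k).2 ↔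
      ∀ m ∈ nextSlots e ω k, (zigzagStep n e ω k).1 + s < m := by
  constructor
  · rintro hω m ⟨hm, i, hi⟩
    obtain ⟨hiU, hie⟩ := mem_filter.1 hi
    by_contra! hms
    have := hω i hiU (m - (zigzagStep n e ω k).1 - 1) (by omega)
    rw [show (zigzagStep n e ω k).1 + (m - (zigzagStep n e ω k).1 - 1) + 1 = m by omega] at this
    simp [hie] at this
  · intro hS i hi r hr
    by_contra hie
    have := hS ((zigzagStep n e ω k).1 + r + 1)
      ⟨by omega, i, mem_filter.2 ⟨hi, by simpa using hie⟩⟩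
    omega

theorem lt_gap_iff (h : Reaches e ω (k + 1)) {s : ℕ} :
    s < gap e ω k ↔
      ω ∈ erasedAfter e (zigzagStep n e ω k).1 s (zigzagStep n e ω k).2 := by
  have hmem := fst_zigzagStep_succ_mem h
  rw [mem_erasedAfter_iff, gap]
  constructor
  · exact fun hs m hm => (by omega : _ < (zigzagStep n e ω (k + 1)).1).trans_le (Nat.sInf_le hm)
  · intro hS
    have := hS _ hmem
    omega

theorem mem_erasedAfter_of_not_reaches (h : Reaches e ω k) (h' : ¬Reaches e ω (k + 1)) (s : ℕ) :
    ω ∈ erasedAfter e (zigzagStep n e ω k).1 s (zigzagStep n e ω k).2 := by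
  have hS : ¬(nextSlots e ω k).Nonempty := fun hS => h' (Reaches.succ_iff.2 ⟨h, hS⟩)
  exact mem_erasedAfter_iff.2 fun m hm => absurd ⟨m, hm⟩ hS

theorem preimage_image_eq_of_eqOnSlots {E : Set Ω} {t : ℕ}
    (hE : ∀ ω ω', EqOnSlots e t ω ω' → ω ∈ E → ω' ∈ E) :
    (fun ω (j : ↥(univ ×ˢ range t)) => e j.1.1 (j.1.2 + 1) ω) ⁻¹'
      ((fun ω (j : ↥(univ ×ˢ range t)) => e j.1.1 (j.1.2 + 1) ω) '' E) = E := by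
  refine (Set.subset_preimage_image _ _).antisymm' ?_
  rintro ω' ⟨ω, hω, hωω'⟩
  refine hE ω ω' (fun i r hr => ?_) hω
  exact congrFun hωω' ⟨(i, r), mem_product.2 ⟨mem_univ i, mem_range.2 hr⟩⟩

theorem erasedAfter_eq_biInter {t : ℕ} (s : ℕ) (U : Finset (Fin n)) :
    erasedAfter e t s U = ⋂ j ∈ U ×ˢ Ico t (t + s), (fun ω => e j.1 (j.2 + 1) ω) ⁻¹' {true} := by
  ext ω
  simp only [erasedAfter, Set.mem_ofPred_eq, Set.mem_iInter, mem_product, mem_Ico,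
    Set.mem_preimage, Set.mem_singleton_iff, and_imp, Prod.forall]
  constructor
  · intro h i m hi hm hms
    simpa [show t + (m - t) = m by omega] using h i hi (m - t) (by omega)
  · intro h i hi r hr
    exact h i (t + r) hi (by omega) (by omega)

variable (e) in
def stage (k : ℕ) (tu : ℕ × Finset (Fin n)) : Set Ω :=
  {ω | zigzagStep n e ω k = tu ∧ Reaches e ω k}

theorem mem_stage_of_eqOnSlots {tu : ℕ × Finset (Fin n)} (ω ω' : Ω) (h : EqOnSlots e tu.1 ω ω')
    (hω : ω ∈ stage e k tu) : ω' ∈ stage e k tu := by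
  obtain ⟨hZ', hR'⟩ := zigzagStep_eq_of_eqOnSlots hω.2 (hω.1 ▸ h)
  exact ⟨hZ'.trans hω.1, hR'⟩

theorem pairwise_disjoint_stage (k : ℕ) : Pairwise (Disjoint on stage e k) :=
  fun _ _ hne => Set.disjoint_left.2 fun _ h h' => hne (h.1.symm.trans h'.1)

theorem iUnion_stage (k : ℕ) : ⋃ tu, stage e k tu = {ω | Reaches e ω k} := by
  ext ω
  simp only [stage, Set.mem_iUnion, Set.mem_ofPred_eq, exists_and_right, exists_eq', true_and]

theorem reaches_inter_erasedAfter_eq_iUnion (k s : ℕ) :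
    {ω | Reaches e ω k ∧ ω ∈ erasedAfter e (zigzagStep n e ω k).1 s (zigzagStep n e ω k).2} =
      ⋃ tu, stage e k tu ∩ erasedAfter e tu.1 s tu.2 := by
  ext ω
  simp only [stage, Set.mem_iUnion, Set.mem_inter_iff, Set.mem_ofPred_eq]
  constructor
  · rintro ⟨hR, hE⟩
    exact ⟨_, ⟨rfl, hR⟩, hE⟩
  · rintro ⟨tu, ⟨rfl, hR⟩, hE⟩
    exact ⟨hR, hE⟩

section Probability

variable [MeasurableSpace Ω]

/-- Slot `0` is never used by the protocol, so only the slots `t ≥ 1` are constrained. -/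
structure IsBernoulliErasures (μ : Measure Ω) (p : ℝ) (e : Fin n → ℕ → Ω → Bool) : Prop where
  measurable : ∀ i t, Measurable (e i t)
  indep : iIndepFun (fun it : Fin n × ℕ => e it.1 (it.2 + 1)) μ
  measure_eq : ∀ i t, 1 ≤ t → μ {ω | e i t ω = true} = ENNReal.ofReal p

variable {μ : Measure Ω} {p : ℝ} {E : Set Ω} {t : ℕ}

theorem measurableSet_of_eqOnSlots (hmeas : ∀ i t, Measurable (e i t))
    (hE : ∀ ω ω', EqOnSlots e t ω ω' → ω ∈ E → ω' ∈ E) : MeasurableSet E := by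
  rw [← preimage_image_eq_of_eqOnSlots hE]
  exact (measurable_pi_iff.2 fun j => hmeas _ _) (Set.to_countable _).measurableSet

theorem measure_erasedAfter (he : IsBernoulliErasures μ p e) (s : ℕ) (U : Finset (Fin n)) :
    μ (erasedAfter e t s U) = ENNReal.ofReal p ^ (#U * s) := by
  rw [erasedAfter_eq_biInter, he.indep.measure_inter_preimage_eq_mul _
    fun _ _ => measurableSet_singleton true]
  rw [prod_congr rfl fun j _ => he.measure_eq j.1 (j.2 + 1) (Nat.le_add_left 1 j.2), prod_const,
    card_product, Nat.card_Ico, Nat.add_sub_cancel_left]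

theorem measure_inter_erasedAfter (he : IsBernoulliErasures μ p e)
    (hE : ∀ ω ω', EqOnSlots e t ω ω' → ω ∈ E → ω' ∈ E) (s : ℕ) (U : Finset (Fin n)) :
    μ (E ∩ erasedAfter e t s U) = μ E * ENNReal.ofReal p ^ (#U * s) := by
  have hindep := he.indep.indepFun_finset (univ ×ˢ range t) (U ×ˢ Ico t (t + s))
    (disjoint_left.2 fun j hj hj' => by
      simp only [mem_product, mem_range, mem_Ico] at hj hj'
      omega) fun j => he.measurable _ _
  have hfut : erasedAfter e t s U =
      (fun ω (j : ↥(U ×ˢ Ico t (t + s))) => e j.1.1 (j.1.2 + 1) ω) ⁻¹' {fun _ => true} := by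
    rw [erasedAfter_eq_biInter]
    ext ω
    simp [funext_iff]
  rw [← measure_erasedAfter he s U, ← preimage_image_eq_of_eqOnSlots hE, hfut]
  exact hindep.measure_inter_preimage_eq_mul _ _ (Set.to_countable _).measurableSet
    (measurableSet_singleton _)

theorem measurableSet_erasedAfter (hmeas : ∀ i t, Measurable (e i t)) (s : ℕ)
    (U : Finset (Fin n)) : MeasurableSet (erasedAfter e t s U) := by
  rw [erasedAfter_eq_biInter]
  exact .biInter (Set.to_countable _) fun j _ => hmeas _ _ (measurableSet_singleton true)

theorem measurableSet_stage (hmeas : ∀ i t, Measurable (e i t)) (k : ℕ)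
    (tu : ℕ × Finset (Fin n)) : MeasurableSet (stage e k tu) :=
  measurableSet_of_eqOnSlots hmeas mem_stage_of_eqOnSlots

theorem measurableSet_reaches_inter_erasedAfter (hmeas : ∀ i t, Measurable (e i t)) (k s : ℕ) :
    MeasurableSet
      {ω | Reaches e ω k ∧ ω ∈ erasedAfter e (zigzagStep n e ω k).1 s (zigzagStep n e ω k).2} := by
  rw [reaches_inter_erasedAfter_eq_iUnion]
  exact .iUnion fun tu =>
    (measurableSet_stage hmeas k tu).inter (measurableSet_erasedAfter hmeas _ _)

theorem measure_reaches_inter_erasedAfter (he : IsBernoulliErasures μ p e) (hk : k ≤ n) (s : ℕ) :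
    μ {ω | Reaches e ω k ∧ ω ∈ erasedAfter e (zigzagStep n e ω k).1 s (zigzagStep n e ω k).2} =
      μ {ω | Reaches e ω k} * ENNReal.ofReal p ^ ((n - k) * s) := by
  have hmeas := measurableSet_stage he.measurable k
  rw [reaches_inter_erasedAfter_eq_iUnion, ← iUnion_stage, measure_iUnion (fun tu tu' hne =>
      ((pairwise_disjoint_stage k) hne).mono Set.inter_subset_left Set.inter_subset_left)
      fun tu => (hmeas tu).inter (measurableSet_erasedAfter he.measurable _ _),
    measure_iUnion (pairwise_disjoint_stage k) hmeas, ← ENNReal.tsum_mul_right]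
  refine tsum_congr fun tu => ?_
  rw [measure_inter_erasedAfter he mem_stage_of_eqOnSlots s tu.2]
  rcases (stage e k tu).eq_empty_or_nonempty with h | ⟨ω, hZ, hR⟩
  · simp [h]
  · rw [← hZ, card_snd_zigzagStep hR hk]

variable [IsProbabilityMeasure μ]

theorem ae_reaches_succ (he : IsBernoulliErasures μ p e) (hp1 : p < 1) (hk : k < n) :
    ∀ᵐ ω ∂μ, Reaches e ω k → Reaches e ω (k + 1) := by
  set q := ENNReal.ofReal p ^ (n - k)
  have hq : q < 1 := pow_lt_one₀ zero_le (ENNReal.ofReal_lt_one.2 hp1) (by omega)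
  rw [ae_iff]
  refine le_antisymm (ge_of_tendsto' (ENNReal.tendsto_pow_atTop_nhds_zero_of_lt_one hq)
    fun s => ?_) zero_le
  calc μ {ω | ¬(Reaches e ω k → Reaches e ω (k + 1))}
      ≤ μ {ω | Reaches e ω k ∧
          ω ∈ erasedAfter e (zigzagStep n e ω k).1 s (zigzagStep n e ω k).2} :=
        measure_mono fun ω hω =>
          have ⟨hR, hR'⟩ := Classical.not_imp.1 hω
          ⟨hR, mem_erasedAfter_of_not_reaches hR hR' s⟩
    _ = μ {ω | Reaches e ω k} * q ^ s := by
        rw [measure_reaches_inter_erasedAfter he hk.le, pow_mul]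
    _ ≤ q ^ s := mul_le_of_le_one_left' prob_le_one

theorem ae_reaches (he : IsBernoulliErasures μ p e) (hp1 : p < 1) (hk : k ≤ n) :
    ∀ᵐ ω ∂μ, Reaches e ω k := by
  induction k with
  | zero => exact ae_of_all _ fun ω j hj => absurd hj j.not_lt_zero
  | succ k ih =>
    filter_upwards [ih (by omega), ae_reaches_succ he hp1 hk] with ω h h' using h' h

theorem measure_reaches (he : IsBernoulliErasures μ p e) (hp1 : p < 1) (hk : k ≤ n) :
    μ {ω | Reaches e ω k} = 1 :=
  (measure_congr (ae_eq_univ.2 (ae_iff.1 (ae_reaches he hp1 hk)))).trans measure_univ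

theorem setOf_lt_gap_ae_eq (he : IsBernoulliErasures μ p e) (hp1 : p < 1) (hk : k < n) (s : ℕ) :
    {ω | s < gap e ω k} =ᵐ[μ]
      {ω | Reaches e ω k ∧ ω ∈ erasedAfter e (zigzagStep n e ω k).1 s (zigzagStep n e ω k).2} := by
  rw [Filter.eventuallyEq_set]
  filter_upwards [ae_reaches he hp1 (k := k + 1) hk] with ω h
  simp only [lt_gap_iff h, and_iff_right (h.mono k.le_succ)]

theorem nullMeasurableSet_lt_gap (he : IsBernoulliErasures μ p e) (hp1 : p < 1) (hk : k < n)
    (s : ℕ) : NullMeasurableSet {ω | s < gap e ω k} μ :=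
  (measurableSet_reaches_inter_erasedAfter he.measurable k s).nullMeasurableSet.congr
    (setOf_lt_gap_ae_eq he hp1 hk s).symm

theorem lintegral_gap (he : IsBernoulliErasures μ p e) (hp1 : p < 1) (hk : k < n) :
    ∫⁻ ω, (gap e ω k : ℝ≥0∞) ∂μ = (1 - ENNReal.ofReal p ^ (n - k))⁻¹ := by
  rw [lintegral_natCast_eq_tsum_measure_lt (nullMeasurableSet_lt_gap he hp1 hk),
    ← ENNReal.tsum_geometric]
  refine tsum_congr fun s => ?_
  rw [measure_congr (setOf_lt_gap_ae_eq he hp1 hk s), measure_reaches_inter_erasedAfter he hk.le,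
    measure_reaches he hp1 hk.le, one_mul, pow_mul]

theorem integrable_gap (he : IsBernoulliErasures μ p e) (hp1 : p < 1) (hk : k < n) :
    Integrable (fun ω => (gap e ω k : ℝ)) μ := by
  have hq : ENNReal.ofReal p ^ (n - k) < 1 :=
    pow_lt_one₀ zero_le (ENNReal.ofReal_lt_one.2 hp1) (by omega)
  have hmeas : AEMeasurable (fun ω => (gap e ω k : ℝ≥0∞)) μ :=
    measurable_from_top.comp_aemeasurable
      (aemeasurable_of_nullMeasurableSet_lt (nullMeasurableSet_lt_gap he hp1 hk))
  simpa using integrable_toReal_of_lintegral_ne_top hmeas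
    (by rw [lintegral_gap he hp1 hk]; exact ENNReal.inv_ne_top.2 (tsub_pos_of_lt hq).ne')

theorem integral_gap (he : IsBernoulliErasures μ p e) (hp0 : 0 ≤ p) (hp1 : p < 1) (hk : k < n) :
    ∫ ω, (gap e ω k : ℝ) ∂μ = 1 / (1 - p ^ (n - k)) := by
  rw [integral_eq_lintegral_of_nonneg_ae (ae_of_all _ fun _ => Nat.cast_nonneg _)
    (integrable_gap he hp1 hk).aestronglyMeasurable]
  simp only [ENNReal.ofReal_natCast, lintegral_gap he hp1 hk]
  rw [ENNReal.toReal_inv, ENNReal.toReal_sub_of_le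
      (pow_le_one₀ zero_le (ENNReal.ofReal_le_one.2 hp1.le)) ENNReal.one_ne_top,
    ENNReal.toReal_pow, ENNReal.toReal_ofReal hp0, ENNReal.toReal_one, one_div]

end Probability

end ZigZag

theorem zigzag_delivery_time_general
    {Ω : Type*} [MeasurableSpace Ω] (μ : Measure Ω) [IsProbabilityMeasure μ]
    (p : ℝ) (hp0 : 0 < p) (hp1 : p < 1) (n : ℕ)
    (e : Fin n → ℕ → Ω → Bool) (hmeas : ∀ i t, Measurable (e i t))
    (hindep : iIndepFun
      (fun it : Fin n × ℕ => e it.1 (it.2 + 1)) μ)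
    (hdist : ∀ (i : Fin n) (t : ℕ), 1 ≤ t →
      μ {ω | e i t ω = true} = ENNReal.ofReal p) :
    (∀ᵐ ω ∂μ, ∀ k < n,
      {t : ℕ | (zigzagStep n e ω k).1 < t ∧
        ((zigzagStep n e ω k).2.filter (fun i => e i t ω = false)).Nonempty}.Nonempty) ∧
    ∫ ω, ((zigzagStep n e ω n).1 : ℝ) ∂μ =
      ∑ k ∈ Finset.Icc 1 n, 1 / (1 - p ^ k) := by
  have he : ZigZag.IsBernoulliErasures μ p e := ⟨hmeas, hindep, hdist⟩
  have hreach := ZigZag.ae_reaches he hp1 le_rfl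
  refine ⟨hreach, ?_⟩
  have hsum : (fun ω => ((zigzagStep n e ω n).1 : ℝ)) =ᵐ[μ]
      fun ω => ∑ k ∈ range n, (ZigZag.gap e ω k : ℝ) :=
    hreach.mono fun ω h => by simp only [← ZigZag.sum_range_gap h, Nat.cast_sum]
  rw [integral_congr_ae hsum,
    integral_finsetSum _ fun k hk => ZigZag.integrable_gap he hp1 (mem_range.1 hk),
    sum_congr rfl fun k hk => ZigZag.integral_gap he hp0.le hp1 (mem_range.1 hk)]
  exact sum_range_tsub_eq_sum_Icc (fun k => 1 / (1 - p ^ k)) n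

/-- **Theorem 3 (ZigZag delivery time).** In the ZigZag model with `n` senders and erasure
probability `p ∈ (0,1)` (the erasure indicators `e i t` for `t ≥ 1` being i.i.d. with
`P(e i t = 1) = p`), the delivery time `T_D(n) = T_n = (zigzagStep n e ω n).1` is almost
surely finite (each set whose infimum defines `T_{k+1}` is a.s. nonempty) and its
expectation equals `∑_{k=1}^n 1/(1 - p^k)`. -/
theorem zigzag_delivery_time
    {Ω : Type*} [MeasurableSpace Ω] (μ : Measure Ω) [IsProbabilityMeasure μ]
    (p : ℝ) (hp0 : 0 < p) (hp1 : p < 1) (n : ℕ) (hn : 1 ≤ n)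
    (e : Fin n → ℕ → Ω → Bool) (hmeas : ∀ i t, Measurable (e i t))
    (hindep : iIndepFun
      (fun it : Fin n × ℕ => e it.1 (it.2 + 1)) μ)
    (hdist : ∀ (i : Fin n) (t : ℕ), 1 ≤ t →
      μ {ω | e i t ω = true} = ENNReal.ofReal p) :
    (∀ᵐ ω ∂μ, ∀ k < n,
      {t : ℕ | (zigzagStep n e ω k).1 < t ∧
        ((zigzagStep n e ω k).2.filter (fun i => e i t ω = false)).Nonempty}.Nonempty) ∧
    ∫ ω, ((zigzagStep n e ω n).1 : ℝ) ∂μ =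
      ∑ k ∈ Finset.Icc 1 n, 1 / (1 - p ^ k) :=
  zigzag_delivery_time_general μ p hp0 hp1 n e hmeas hindep hdist
end

section
/- (Lemma, vertices of the dominant face) Let p ∈ (0,1) and n ≥ 1, and let F = { λ ∈ ℝ^n : λ_j ≥ 0 for all j, Σ_{j∈S} λ_j ≤ 1 − p^{|S|} for every nonempty S ⊆ {1,…,n}, and Σ_{j=1}^{n} λ_j = 1 − p^n } be the dominant face of the stability region. For every permutation π of {1,…,n}, the vector λ^π defined by λ^π_{π(i)} = (1−p) p^{i−1} belongs to F and is an extreme point of F; conversely, every extreme point of F is of the form λ^π for some permutation π. Hence extreme points of F are in one-to-one correspondence with permutations of {1,…,n} (the vectors λ^π being pairwise distinct). -/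
/-!
Call `S` tight for `x` when `∑_{j ∈ S} x_j = 1 - p^{|S|}`. For `λ^π` the prefixes
`π{0, …, k-1}` are tight, and a point of `F` that is tight on every prefix equals `λ^π`; as a
constraint tight at an interior point of a segment in `F` is tight at both ends, `λ^π` is extreme.
Conversely, strict supermodularity of `S ↦ p^{|S|}` makes the tight sets of any point of `F` a
chain, and at an extreme point this chain separates any two coordinates (otherwise moving mass
between them stays inside `F`). Hence every `j` enters the chain alone, between tight sets `A` and
`insert j A`, so `x_j = p^{|A|} - p^{|A|+1}`, and `j ↦ |A|` is the permutation.
-/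

open Finset Filter Topology

section Chain

variable {α : Type*} {𝒯 : Set (Finset α)}

lemma IsChain.subset_of_card_le (h𝒯 : IsChain (· ⊆ ·) 𝒯) {A B : Finset α} (hA : A ∈ 𝒯)
    (hB : B ∈ 𝒯) (hAB : #A ≤ #B) : A ⊆ B :=
  (h𝒯.total hA hB).elim id fun hBA => (eq_of_subset_of_card_le hBA hAB).ge

lemma IsChain.eq_of_insert_mem [DecidableEq α] (h𝒯 : IsChain (· ⊆ ·) 𝒯) {A B : Finset α}
    {i j : α} (hA : A ∈ 𝒯) (hB : B ∈ 𝒯) (hiA : i ∉ A) (hjB : j ∉ B)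
    (hiA' : insert i A ∈ 𝒯) (hjB' : insert j B ∈ 𝒯) (hAB : #A = #B) : i = j := by
  obtain rfl : A = B :=
    (h𝒯.subset_of_card_le hA hB hAB.le).antisymm (h𝒯.subset_of_card_le hB hA hAB.ge)
  have hsub : insert i A ⊆ insert j A := h𝒯.subset_of_card_le hiA' hjB' <| by
    rw [card_insert_of_notMem hiA, card_insert_of_notMem hjB]
  exact (mem_insert.1 (hsub (mem_insert_self i A))).resolve_right hiA

lemma IsChain.exists_insert_mem [DecidableEq α] [Fintype α] (h𝒯 : IsChain (· ⊆ ·) 𝒯)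
    (hempty : ∅ ∈ 𝒯) (huniv : univ ∈ 𝒯) (hsep : ∀ i j, i ≠ j → ∃ S ∈ 𝒯, ¬(i ∈ S ↔ j ∈ S)) (j : α) :
    ∃ A ∈ 𝒯, j ∉ A ∧ insert j A ∈ 𝒯 := by
  -- `A` is the largest member avoiding `j`, `B` the smallest containing `j`: a member separating
  -- `j` from another point of `B \ A` would lie strictly between them.
  obtain ⟨A, ⟨hA, hjA⟩, hAmax⟩ := Set.exists_max_image {S ∈ 𝒯 | j ∉ S} card (Set.toFinite _)
    ⟨∅, hempty, notMem_empty j⟩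
  obtain ⟨B, ⟨hB, hjB⟩, hBmin⟩ := Set.exists_min_image {S ∈ 𝒯 | j ∈ S} card (Set.toFinite _)
    ⟨univ, huniv, mem_univ j⟩
  have hAB : A ⊆ B := (h𝒯.total hA hB).resolve_right fun hBA => hjA (hBA hjB)
  have hBA : B ⊆ insert j A := by
    intro i hiB
    rw [mem_insert]
    by_contra! hi
    obtain ⟨S, hS, hij⟩ := hsep i j hi.1
    by_cases hjS : j ∈ S
    · exact hij ⟨fun _ => hjS, fun _ => h𝒯.subset_of_card_le hB hS (hBmin S ⟨hS, hjS⟩) hiB⟩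
    · exact hi.2 (h𝒯.subset_of_card_le hS hA (hAmax S ⟨hS, hjS⟩) (by tauto))
  refine ⟨A, hA, hjA, ?_⟩
  rwa [(insert_subset hjB hAB).antisymm hBA]

end Chain

lemma Antitone.sum_le_sum_range_card {f : ℕ → ℝ} (hf : Antitone f) (T : Finset ℕ) :
    ∑ i ∈ T, f i ≤ ∑ i ∈ range #T, f i := by
  induction T using Finset.induction_on_max with
  | empty => simp
  | insert a s has ih =>
    have hs : #s ≤ a := by simpa using card_le_card fun x hx => mem_range.2 (has x hx)
    have haS : a ∉ s := fun h => lt_irrefl a (has a h)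
    rw [sum_insert haS, card_insert_of_notMem haS, sum_range_succ]
    linarith [hf hs]

lemma pow_add_pow_lt_pow_add_pow {p : ℝ} (hp0 : 0 < p) (hp1 : p < 1) (k : ℕ) {d₁ d₂ : ℕ}
    (hd₁ : d₁ ≠ 0) (hd₂ : d₂ ≠ 0) :
    p ^ (k + d₁) + p ^ (k + d₂) < p ^ k + p ^ (k + d₁ + d₂) := by
  have hpos : 0 < p ^ k * ((1 - p ^ d₁) * (1 - p ^ d₂)) :=
    mul_pos (pow_pos hp0 k) (mul_pos (sub_pos.2 (pow_lt_one₀ hp0.le hp1 hd₁))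
      (sub_pos.2 (pow_lt_one₀ hp0.le hp1 hd₂)))
  linarith [show p ^ k * ((1 - p ^ d₁) * (1 - p ^ d₂)) =
    p ^ k + p ^ (k + d₁ + d₂) - (p ^ (k + d₁) + p ^ (k + d₂)) by ring]

lemma eq_zero_of_add_smul_mem_of_mem_extremePoints {E : Type*} [AddCommGroup E] [Module ℝ E]
    {A : Set E} {x d : E} (hx : x ∈ A.extremePoints ℝ)
    (hd : ∀ᶠ t in 𝓝 (0 : ℝ), x + t • d ∈ A) : d = 0 := by
  have hneg : ∀ᶠ t in 𝓝 (0 : ℝ), x + (-t) • d ∈ A :=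
    (continuous_neg.tendsto' 0 0 neg_zero).eventually hd
  obtain ⟨t, ⟨hpos, hneg⟩, ht⟩ :=
    (((hd.and hneg).filter_mono nhdsWithin_le_nhds).and (self_mem_nhdsWithin :
      ∀ᶠ t in 𝓝[>] (0 : ℝ), 0 < t)).exists
  have hmid : x ∈ openSegment ℝ (x + t • d) (x + (-t) • d) :=
    ⟨1 / 2, 1 / 2, by norm_num, by norm_num, by norm_num, by module⟩
  simpa [ht.ne'] using hx.2 hpos hneg hmid

def dominantFace (p : ℝ) (ι : Type*) [Fintype ι] : Set (ι → ℝ) :=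
  {x | (∀ j, 0 ≤ x j) ∧ (∀ S : Finset ι, ∑ j ∈ S, x j ≤ 1 - p ^ #S) ∧
    ∑ j, x j = 1 - p ^ Fintype.card ι}

def IsTight {ι : Type*} (p : ℝ) (x : ι → ℝ) (S : Finset ι) : Prop :=
  ∑ j ∈ S, x j = 1 - p ^ #S

def priorityVertex {ι : Type*} {m : ℕ} (π : Fin m ≃ ι) (p : ℝ) : ι → ℝ :=
  fun j => (1 - p) * p ^ (π.symm j : ℕ)

def priorityPrefix {ι : Type*} [Fintype ι] {m : ℕ} (π : Fin m ≃ ι) (k : ℕ) : Finset ι :=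
  {j | (π.symm j : ℕ) < k}

section DominantFace

variable {ι : Type*} {p : ℝ}

lemma isTight_empty (x : ι → ℝ) : IsTight p x ∅ := by
  simp [IsTight]

lemma isTight_univ [Fintype ι] {x : ι → ℝ} (hx : x ∈ dominantFace p ι) : IsTight p x univ := by
  simpa [IsTight] using hx.2.2

lemma isTight_insert_iff [DecidableEq ι] {x : ι → ℝ} {A : Finset ι} {j : ι}
    (hA : IsTight p x A) (hjA : j ∉ A) : IsTight p x (insert j A) ↔ x j = (1 - p) * p ^ #A := by
  unfold IsTight at hA ⊢
  rw [sum_insert hjA, card_insert_of_notMem hjA, hA, pow_succ]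
  constructor <;> intro h <;> linarith

lemma IsTight.of_mem_openSegment [Fintype ι] {x y z : ι → ℝ} {S : Finset ι}
    (hx : IsTight p x S) (hy : y ∈ dominantFace p ι) (hz : z ∈ dominantFace p ι)
    (hxyz : x ∈ openSegment ℝ y z) :
    IsTight p y S ∧ IsTight p z S := by
  obtain ⟨a, b, ha, hb, hab, rfl⟩ := hxyz
  have hsum : ∑ j ∈ S, (a • y + b • z) j = a * ∑ j ∈ S, y j + b * ∑ j ∈ S, z j := by
    simp [sum_add_distrib, mul_sum]
  unfold IsTight at hx ⊢
  have hslack : a * (1 - p ^ #S - ∑ j ∈ S, y j) + b * (1 - p ^ #S - ∑ j ∈ S, z j) = 0 := by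
    linear_combination (1 - p ^ #S) * hab - hsum.symm.trans hx
  obtain ⟨hyS, hzS⟩ := (add_eq_zero_iff_of_nonneg
    (mul_nonneg ha.le (sub_nonneg.2 (hy.2.1 S))) (mul_nonneg hb.le (sub_nonneg.2 (hz.2.1 S)))).1
    hslack
  constructor
  · linarith [(mul_eq_zero.1 hyS).resolve_left ha.ne']
  · linarith [(mul_eq_zero.1 hzS).resolve_left hb.ne']

section Vertex

variable {m : ℕ} (π : Fin m ≃ ι)

lemma priorityVertex_injective (hp0 : 0 < p) (hp1 : p < 1) :
    Function.Injective fun π : Fin m ≃ ι => priorityVertex π p := by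
  intro π π' h
  have hsymm : π.symm = π'.symm := Equiv.ext fun j => Fin.ext <|
    pow_right_injective₀ hp0 hp1.ne <| mul_left_cancel₀ (sub_ne_zero.2 hp1.ne') (congrFun h j)
  simpa using congrArg Equiv.symm hsymm

variable [Fintype ι]

@[simp]
lemma mem_priorityPrefix {k : ℕ} {j : ι} : j ∈ priorityPrefix π k ↔ (π.symm j : ℕ) < k := by
  simp [priorityPrefix]

lemma card_priorityPrefix {k : ℕ} (hk : k ≤ m) : #(priorityPrefix π k) = k := by
  rw [card_equiv π.symm (t := {i : Fin m | (i : ℕ) < k}) (by simp), Fin.card_filter_val_lt,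
    min_eq_right hk]

lemma priorityPrefix_succ [DecidableEq ι] (i : Fin m) :
    priorityPrefix π (i + 1) = insert (π i) (priorityPrefix π i) := by
  ext j
  rw [mem_priorityPrefix, mem_insert, mem_priorityPrefix, ← π.symm_apply_eq, Fin.ext_iff]
  omega

lemma priorityPrefix_self : priorityPrefix π m = univ := by
  ext j
  simp

lemma notMem_priorityPrefix (i : Fin m) : π i ∉ priorityPrefix π i := by
  simp

variable [DecidableEq ι]

lemma isTight_priorityPrefix {y : ι → ℝ} {i : Fin m} (hi : IsTight p y (priorityPrefix π i)) :
    IsTight p y (priorityPrefix π (i + 1)) ↔ y (π i) = (1 - p) * p ^ (i : ℕ) := by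
  rw [priorityPrefix_succ, isTight_insert_iff hi (notMem_priorityPrefix π i),
    card_priorityPrefix π i.is_lt.le]

lemma priorityVertex_isTight_priorityPrefix {k : ℕ} (hk : k ≤ m) :
    IsTight p (priorityVertex π p) (priorityPrefix π k) := by
  induction k with
  | zero => simpa [priorityPrefix] using isTight_empty _
  | succ k ih =>
    exact (isTight_priorityPrefix π (i := ⟨k, hk⟩) (ih (by omega))).2 (by simp [priorityVertex])

lemma eq_priorityVertex_of_isTight {y : ι → ℝ}
    (hy : ∀ k ≤ m, IsTight p y (priorityPrefix π k)) : y = priorityVertex π p := by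
  funext j
  obtain ⟨i, rfl⟩ := π.surjective j
  simpa [priorityVertex] using
    (isTight_priorityPrefix π (hy i i.is_lt.le)).1 (hy (i + 1) i.is_lt)

lemma priorityVertex_mem (hp0 : 0 ≤ p) (hp1 : p ≤ 1) :
    priorityVertex π p ∈ dominantFace p ι := by
  refine ⟨fun j => mul_nonneg (sub_nonneg.2 hp1) (pow_nonneg hp0 _), fun S => ?_, ?_⟩
  · have hinj : Set.InjOn (fun j => (π.symm j : ℕ)) S :=
      fun i _ j _ h => π.symm.injective (Fin.ext h)
    calc ∑ j ∈ S, priorityVertex π p j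
        = (1 - p) * ∑ i ∈ S.image fun j => (π.symm j : ℕ), p ^ i := by
          rw [sum_image hinj, mul_sum]; rfl
      _ ≤ (1 - p) * ∑ i ∈ range #S, p ^ i := by
          refine mul_le_mul_of_nonneg_left ?_ (sub_nonneg.2 hp1)
          simpa [card_image_of_injOn hinj] using
            (pow_right_anti₀ hp0 hp1).sum_le_sum_range_card (S.image fun j => (π.symm j : ℕ))
      _ = 1 - p ^ #S := mul_neg_geom_sum p #S
  · have h := priorityVertex_isTight_priorityPrefix π (p := p) le_rfl
    rwa [priorityPrefix_self, IsTight, card_univ] at h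

lemma priorityVertex_mem_extremePoints (hp0 : 0 ≤ p) (hp1 : p ≤ 1) :
    priorityVertex π p ∈ (dominantFace p ι).extremePoints ℝ := by
  refine mem_extremePoints.2 ⟨priorityVertex_mem π hp0 hp1, fun y hy z hz hseg => ?_⟩
  have htight := fun k (hk : k ≤ m) =>
    (priorityVertex_isTight_priorityPrefix π (p := p) hk).of_mem_openSegment hy hz hseg
  exact ⟨eq_priorityVertex_of_isTight π fun k hk => (htight k hk).1,
    eq_priorityVertex_of_isTight π fun k hk => (htight k hk).2⟩

end Vertex

section Converse

variable [Fintype ι] {x : ι → ℝ}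

lemma pos_of_mem_dominantFace (hp0 : 0 < p) (hp1 : p < 1) (hx : x ∈ dominantFace p ι)
    (j : ι) : 0 < x j := by
  classical
  obtain ⟨d, hd⟩ := Nat.exists_eq_add_one_of_ne_zero (Fintype.card_pos_iff.2 ⟨j⟩).ne'
  have hrest := hx.2.1 (univ.erase j)
  rw [card_erase_of_mem (mem_univ j), card_univ, hd, Nat.add_sub_cancel] at hrest
  have htotal := hx.2.2
  rw [← add_sum_erase univ x (mem_univ j), hd, pow_succ] at htotal
  nlinarith [pow_pos hp0 d]

lemma isChain_isTight [DecidableEq ι] (hp0 : 0 < p) (hp1 : p < 1)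
    (hx : x ∈ dominantFace p ι) : IsChain (· ⊆ ·) {S | IsTight p x S} := by
  intro A hA B hB _
  by_contra! hAB
  have hinterA : #(A ∩ B) < #A :=
    card_lt_card ⟨inter_subset_left, fun h => hAB.1 fun a ha => (mem_inter.1 (h ha)).2⟩
  have hinterB : #(A ∩ B) < #B :=
    card_lt_card ⟨inter_subset_right, fun h => hAB.2 fun b hb => (mem_inter.1 (h hb)).1⟩
  have hcard := card_union_add_card_inter A B
  have hpow := pow_add_pow_lt_pow_add_pow hp0 hp1 #(A ∩ B) (d₁ := #A - #(A ∩ B))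
    (d₂ := #B - #(A ∩ B)) (by omega) (by omega)
  rw [show #(A ∩ B) + (#A - #(A ∩ B)) = #A by omega,
    show #(A ∩ B) + (#B - #(A ∩ B)) = #B by omega,
    show #A + (#B - #(A ∩ B)) = #(A ∪ B) by omega] at hpow
  have hsum := sum_union_inter (s₁ := A) (s₂ := B) (f := x)
  simp only [Set.mem_ofPred_eq, IsTight] at hA hB
  linarith [hx.2.1 (A ∪ B), hx.2.1 (A ∩ B)]

lemma eventually_add_smul_mem_dominantFace (hp0 : 0 < p) (hp1 : p < 1)
    (hx : x ∈ dominantFace p ι) {d : ι → ℝ} (hd : ∀ S, IsTight p x S → ∑ j ∈ S, d j = 0) :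
    ∀ᶠ t in 𝓝 (0 : ℝ), x + t • d ∈ dominantFace p ι := by
  have hsum (t : ℝ) (S : Finset ι) :
      ∑ j ∈ S, (x + t • d) j = ∑ j ∈ S, x j + t * ∑ j ∈ S, d j := by
    simp [sum_add_distrib, mul_sum]
  have hcont (a b : ℝ) : Tendsto (fun t : ℝ => a + t * b) (𝓝 0) (𝓝 a) :=
    (by fun_prop : Continuous fun t : ℝ => a + t * b).tendsto' 0 a (by simp)
  have hnonneg (j : ι) : ∀ᶠ t in 𝓝 (0 : ℝ), 0 ≤ (x + t • d) j :=
    ((hcont (x j) (d j)).eventually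
      (eventually_gt_nhds (pos_of_mem_dominantFace hp0 hp1 hx j))).mono fun t ht => by
        simpa using ht.le
  have hbound (S : Finset ι) : ∀ᶠ t in 𝓝 (0 : ℝ), ∑ j ∈ S, (x + t • d) j ≤ 1 - p ^ #S := by
    simp only [hsum]
    by_cases hS : IsTight p x S
    · exact Eventually.of_forall fun t => by rw [hd S hS, mul_zero, add_zero, hS]
    · exact ((hcont _ _).eventually (eventually_lt_nhds (lt_of_le_of_ne (hx.2.1 S) hS))).mono
        fun t ht => ht.le
  filter_upwards [eventually_all.2 hnonneg, eventually_all.2 hbound] with t hnonneg hbound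
  refine ⟨hnonneg, hbound, ?_⟩
  rw [hsum, hd univ (isTight_univ hx), mul_zero, add_zero, hx.2.2]

lemma exists_isTight_separating [DecidableEq ι] (hp0 : 0 < p) (hp1 : p < 1)
    (hx : x ∈ (dominantFace p ι).extremePoints ℝ) {i j : ι} (hij : i ≠ j) :
    ∃ S, IsTight p x S ∧ ¬(i ∈ S ↔ j ∈ S) := by
  by_contra! h
  have hd := eq_zero_of_add_smul_mem_of_mem_extremePoints hx <|
    eventually_add_smul_mem_dominantFace hp0 hp1 hx.1 (d := Pi.single i 1 - Pi.single j 1)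
      fun S hS => by simp [sum_sub_distrib, h S hS]
  simpa [hij] using congrFun hd i

lemma exists_eq_priorityVertex [DecidableEq ι] (hp0 : 0 < p) (hp1 : p < 1) {m : ℕ}
    (hm : Fintype.card ι = m) (hx : x ∈ (dominantFace p ι).extremePoints ℝ) :
    ∃ π : Fin m ≃ ι, x = priorityVertex π p := by
  have hchain := isChain_isTight hp0 hp1 hx.1
  choose A hA hjA hA' using hchain.exists_insert_mem (isTight_empty x) (isTight_univ hx.1)
    fun i j hij => exists_isTight_separating hp0 hp1 hx hij
  let r : ι → Fin m := fun j => ⟨#(A j), hm ▸ card_lt_univ_of_notMem (hjA j)⟩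
  have hr : Function.Injective r := fun i j h =>
    hchain.eq_of_insert_mem (hA i) (hA j) (hjA i) (hjA j) (hA' i) (hA' j) (Fin.val_eq_of_eq h)
  let σ := Equiv.ofBijective r
    ((Fintype.bijective_iff_injective_and_card r).2 ⟨hr, by simp [hm]⟩)
  refine ⟨σ.symm, funext fun j => ?_⟩
  simpa [priorityVertex, σ, r] using (isTight_insert_iff (hA j) (hjA j)).1 (hA' j)

end Converse

end DominantFace

lemma dominantFace_fin (p : ℝ) (n : ℕ) :
    dominantFace p (Fin n) = {l : Fin n → ℝ | (∀ j, 0 ≤ l j) ∧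
      (∀ S : Finset (Fin n), S.Nonempty → (∑ j ∈ S, l j) ≤ 1 - p ^ S.card) ∧
      (∑ j : Fin n, l j) = 1 - p ^ n} := by
  ext l
  simp only [dominantFace, Set.mem_ofPred_eq, Fintype.card_fin]
  refine and_congr_right fun _ => and_congr_left fun _ =>
    ⟨fun h S _ => h S, fun h S => S.eq_empty_or_nonempty.elim (fun hS => by simp [hS]) (h S)⟩

theorem dominant_face_vertices_general (p : ℝ) (hp0 : 0 < p) (hp1 : p < 1)
    (n : ℕ)
    (F : Set (Fin n → ℝ))
    (hF : F = {l : Fin n → ℝ |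
        (∀ j, 0 ≤ l j) ∧
        (∀ S : Finset (Fin n), S.Nonempty → (∑ j ∈ S, l j) ≤ 1 - p ^ S.card) ∧
        (∑ j : Fin n, l j) = 1 - p ^ n})
    (lam : Equiv.Perm (Fin n) → Fin n → ℝ)
    (hlam : ∀ (π : Equiv.Perm (Fin n)) (i : Fin n), lam π (π i) = (1 - p) * p ^ (i : ℕ)) :
    (∀ π : Equiv.Perm (Fin n), lam π ∈ F ∧ lam π ∈ F.extremePoints ℝ) ∧
    (∀ x ∈ F.extremePoints ℝ, ∃ π : Equiv.Perm (Fin n), x = lam π) ∧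
    Function.Injective lam := by
  obtain rfl : F = dominantFace p (Fin n) := hF.trans (dominantFace_fin p n).symm
  obtain rfl : lam = fun π => priorityVertex π p :=
    funext fun π => funext fun j => by simpa [priorityVertex] using hlam π (π.symm j)
  exact ⟨fun π => ⟨priorityVertex_mem π hp0.le hp1.le,
      priorityVertex_mem_extremePoints π hp0.le hp1.le⟩,
    fun x hx => exists_eq_priorityVertex hp0 hp1 (Fintype.card_fin n) hx,
    priorityVertex_injective hp0 hp1⟩

/-- **Lemma (vertices of the dominant face).** Let `p ∈ (0,1)`, `n ≥ 1`, and let `F` be the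
dominant face of the stability region: nonnegative rate vectors `λ ∈ ℝⁿ` with
`∑_{j∈S} λ_j ≤ 1 - p^{|S|}` for every nonempty `S` and `∑_j λ_j = 1 - pⁿ`. For every
permutation `π`, the vector `λ^π` given by `λ^π_{π(i)} = (1-p) pⁱ` (zero-indexed) belongs
to `F` and is an extreme point of `F`; conversely every extreme point of `F` is of this
form; and the map `π ↦ λ^π` is injective, so extreme points of `F` are in one-to-one
correspondence with permutations. -/
theorem dominant_face_vertices (p : ℝ) (hp0 : 0 < p) (hp1 : p < 1)
    (n : ℕ) (hn : 1 ≤ n)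
    (F : Set (Fin n → ℝ))
    (hF : F = {l : Fin n → ℝ |
        (∀ j, 0 ≤ l j) ∧
        (∀ S : Finset (Fin n), S.Nonempty → (∑ j ∈ S, l j) ≤ 1 - p ^ S.card) ∧
        (∑ j : Fin n, l j) = 1 - p ^ n})
    (lam : Equiv.Perm (Fin n) → Fin n → ℝ)
    (hlam : ∀ (π : Equiv.Perm (Fin n)) (i : Fin n), lam π (π i) = (1 - p) * p ^ (i : ℕ)) :
    (∀ π : Equiv.Perm (Fin n), lam π ∈ F ∧ lam π ∈ F.extremePoints ℝ) ∧
    (∀ x ∈ F.extremePoints ℝ, ∃ π : Equiv.Perm (Fin n), x = lam π) ∧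
    Function.Injective lam :=
  dominant_face_vertices_general p hp0 hp1 n F hF lam hlam
end
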